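/- The combined security class structure ({L,H} × P(I), ⊴), where ⊴ is the reflexive closure of ⊑, is not a join-semilattice whenever I contains at least one element α: the elements (H, ∅) and (H, {α}) have no common upper bound, hence no join exists. -/
import Mathlib


inductive Lvl | L | H
deriving DecidableEq

def sle {I : Type*} (a b : Lvl × Set I) : Prop :=
  ((a.1 = Lvl.L ∧ b.1 = Lvl.H) ∨ (a.1 = Lvl.L ∧ b.1 = Lvl.L)) ∧ a.2 ⊆ b.2

/-- reflexive closure of `sle` -/
def sleR {I : Type*} (a b : Lvl × Set I) : Prop := sle a b ∨ a = b

theorem stmt5 {I : Type*} (α : I) :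
    ¬ ∃ z : Lvl × Set I, sleR (Lvl.H, (∅ : Set I)) z ∧ sleR (Lvl.H, ({α} : Set I)) z := by
  rintro ⟨z, h1, h2⟩
  rcases h1 with ⟨(⟨h,_⟩|⟨h,_⟩), _⟩ | rfl
  · exact Lvl.noConfusion h
  · exact Lvl.noConfusion h
  · rcases h2 with ⟨(⟨h,_⟩|⟨h,_⟩), _⟩ | heq
    · exact Lvl.noConfusion h
    · exact Lvl.noConfusion h
    · have h2 := congrArg Prod.snd heq
      simp only at h2
      exact (Set.singleton_ne_empty α) h2
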